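/- If T satisfies constraints 1 and 4, and R is a 'restriction' transition system whose every output is an input of T (after renaming) and which has no inputs shared with T, then even if R violates constraint 4 (outputs may mirror inputs instantaneously), the composition T' = T ∥ R (with T's corresponding inputs renamed to match R's outputs) satisfies constraint 4. -/

import Mathlib

open Classical

noncomputable section

abbrev BExpr (E : Type) := (E → Bool) → Bool

def DependsOnVars {E : Type} (l : BExpr E) (V : Set E) : Prop :=
  ∀ σ τ : E → Bool, (∀ a ∈ V, σ a = τ a) → l σ = l τ

def IsFullConj {E : Type} (l : BExpr E) (V : Set E) : Prop :=
  ∃ p : E → Bool, ∀ σ : E → Bool, (l σ = true ↔ ∀ a ∈ V, σ a = p a)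

def Matches' {E : Type} (I : Set E) (l : BExpr E) (A : Set E) : Prop :=
  ∃ σ : E → Bool, (∀ a ∈ I, (σ a = true ↔ a ∈ A)) ∧ l σ = true

def Sat {E : Type} (l : BExpr E) : Prop := ∃ σ, l σ = true

structure TS (E : Type) where
  S : Type
  i : S
  Ev : Set E
  I : Set E
  Tran : Set (S × BExpr E × S)

namespace TS

variable {E : Type}

/-- Constraint 1: determinism/totality of matching. -/
def C1 (T : TS E) : Prop :=
  ∀ s : T.S, ∀ A : Set E, A ⊆ T.I →
    ∃! t : BExpr E × T.S, ((s, t.1, t.2) ∈ T.Tran ∧ Matches' T.I t.1 A)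

/-- Constraint 2: every label has the form x·y, x ∈ Bool(I), y ∈ Conj(E∖I). -/
def C2 (T : TS E) : Prop :=
  ∀ ⦃s : T.S⦄ ⦃l : BExpr E⦄ ⦃s' : T.S⦄, (s, l, s') ∈ T.Tran →
    ∃ x y : BExpr E, DependsOnVars x T.I ∧ IsFullConj y (T.Ev \ T.I) ∧
      ∀ σ, l σ = (x σ && y σ)

inductive Reach (T : TS E) : T.S → Prop
  | init : Reach T T.i
  | step {s : T.S} {l : BExpr E} {s' : T.S} :
      Reach T s → (s, l, s') ∈ T.Tran → Sat l → Reach T s'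

/-- Constraint 3: all states reachable. -/
def C3 (T : TS E) : Prop := ∀ s : T.S, Reach T s

/-- Constraint 4: a single output subexpression per state. -/
def C4 (T : TS E) : Prop :=
  ∀ s : T.S, ∃ y : BExpr E, IsFullConj y (T.Ev \ T.I) ∧
    ∀ ⦃l : BExpr E⦄ ⦃s' : T.S⦄, (s, l, s') ∈ T.Tran →
      ∃ x : BExpr E, DependsOnVars x T.I ∧ ∀ σ, l σ = (x σ && y σ)

def WF (T : TS E) : Prop := T.I ⊆ T.Ev

/-- θ / hiding of shared variables: existentially quantify them away. -/
def hide (H : Set E) (l : BExpr E) : BExpr E :=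
  fun σ => decide (∃ τ : E → Bool, (∀ a ∉ H, τ a = σ a) ∧ l τ = true)

/-- Product T' = P × Q. -/
def prod (P Q : TS E) : TS E where
  S := P.S × Q.S
  i := (P.i, Q.i)
  Ev := P.Ev ∪ Q.Ev
  I := P.I ∪ Q.I
  Tran := { t | ∃ lP lQ : BExpr E,
      (t.1.1, lP, t.2.2.1) ∈ P.Tran ∧ (t.1.2, lQ, t.2.2.2) ∈ Q.Tran ∧
      t.2.1 = fun σ => lP σ && lQ σ }

/-- Composition T = P ∥ Q: satisfiable product transitions with shared events hidden. -/
def comp (P Q : TS E) : TS E where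
  S := P.S × Q.S
  i := (P.i, Q.i)
  Ev := (P.Ev ∪ Q.Ev) \ (P.Ev ∩ Q.Ev)
  I := (P.I ∪ Q.I) \ (P.Ev ∩ Q.Ev)
  Tran := { t | ∃ lP lQ : BExpr E,
      (t.1.1, lP, t.2.2.1) ∈ P.Tran ∧ (t.1.2, lQ, t.2.2.2) ∈ Q.Tran ∧
      Sat (fun σ => lP σ && lQ σ) ∧
      t.2.1 = hide (P.Ev ∩ Q.Ev) (fun σ => lP σ && lQ σ) }

/-- Condition D: every shared event is an input of exactly one of the systems. -/
def SharedOK (P Q : TS E) : Prop :=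
  ∀ a ∈ P.Ev ∩ Q.Ev, (a ∈ P.I ∧ a ∉ Q.I) ∨ (a ∈ Q.I ∧ a ∉ P.I)

def Composable (P Q : TS E) : Prop :=
  P.WF ∧ Q.WF ∧ P.C1 ∧ P.C2 ∧ P.C3 ∧ Q.C1 ∧ Q.C2 ∧ Q.C3 ∧ SharedOK P Q ∧
  (P.C4 ∨ Q.C4) ∧
  (¬ P.C4 → P.Ev ∩ Q.Ev = P.Ev \ P.I) ∧
  (¬ Q.C4 → P.Ev ∩ Q.Ev = Q.Ev \ Q.I)

/-- A run of the system under input sequence A. -/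
def Run (T : TS E) (A : ℕ → Set E) (r : ℕ → T.S) : Prop :=
  r 0 = T.i ∧ ∀ n : ℕ, ∃ l : BExpr E,
    (r n, l, r (n + 1)) ∈ T.Tran ∧ Matches' T.I l (A n)

/-- Output event e occurs at time t of the run. -/
def EmitsAt (T : TS E) (A : ℕ → Set E) (r : ℕ → T.S) (e : E) (t : ℕ) : Prop :=
  ∃ l : BExpr E, (r t, l, r (t + 1)) ∈ T.Tran ∧ Matches' T.I l (A t) ∧
    ∀ σ : E → Bool, l σ = true → σ e = true

end TS

/-!
The shared events are outputs of `R` and inputs of `T`, so hiding them never touches the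
output part of `T`'s labels. Hence at a composite state `(s, t)` the output subexpression `y`
that constraint 4 provides for `T` at `s` factors out of every composite label:
`hide H ((x_T ∧ y) ∧ l_R) = hide H (x_T ∧ l_R) ∧ y`, and what remains depends only on the
inputs of the composition.
-/

namespace DependsOnVars

variable {E : Type} {l m : BExpr E} {V W : Set E}

lemma mono (h : DependsOnVars l V) (hVW : V ⊆ W) : DependsOnVars l W :=
  fun σ τ hστ => h σ τ fun a ha => hστ a (hVW ha)

lemma and (hl : DependsOnVars l V) (hm : DependsOnVars m W) :
    DependsOnVars (fun σ => l σ && m σ) (V ∪ W) := fun σ τ hστ => by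
  dsimp only
  rw [hl σ τ fun a ha => hστ a (Or.inl ha), hm σ τ fun a ha => hστ a (Or.inr ha)]

lemma hide (h : DependsOnVars l V) (H : Set E) : DependsOnVars (TS.hide H l) (V \ H) := by
  have key : ∀ σ τ : E → Bool, (∀ a ∈ V \ H, σ a = τ a) →
      TS.hide H l σ = true → TS.hide H l τ = true := by
    intro σ τ hστ hσ
    rw [TS.hide, decide_eq_true_eq] at hσ ⊢
    obtain ⟨ρ, hρ, hlρ⟩ := hσ
    -- keep `ρ` on the hidden events and switch to `τ` elsewhere
    refine ⟨fun a => if a ∈ H then ρ a else τ a, fun a ha => if_neg ha, hlρ ▸ h _ _ ?_⟩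
    intro a ha
    by_cases haH : a ∈ H
    · simp [haH]
    · simp [haH, ← hστ a ⟨ha, haH⟩, hρ a haH]
  intro σ τ hστ
  rw [Bool.eq_iff_iff]
  exact ⟨key σ τ hστ, key τ σ fun a ha => (hστ a ha).symm⟩

end DependsOnVars

lemma IsFullConj.dependsOnVars {E : Type} {l : BExpr E} {V : Set E} (h : IsFullConj l V) :
    DependsOnVars l V := by
  obtain ⟨p, hp⟩ := h
  intro σ τ hστ
  rw [Bool.eq_iff_iff, hp, hp]
  exact forall₂_congr fun a ha => by rw [hστ a ha]

namespace TS

variable {E : Type}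

lemma hide_and_of_dependsOnVars {l y : BExpr E} {V H : Set E} (hy : DependsOnVars y V)
    (hVH : Disjoint V H) (σ : E → Bool) :
    hide H (fun τ => l τ && y τ) σ = (hide H l σ && y σ) := by
  have hyσ : ∀ τ : E → Bool, (∀ a ∉ H, τ a = σ a) → y τ = y σ := fun τ hτ =>
    hy τ σ fun a ha => hτ a (Set.disjoint_left.mp hVH ha)
  rw [Bool.eq_iff_iff]
  simp only [hide, Bool.and_eq_true, decide_eq_true_eq]
  constructor
  · rintro ⟨τ, hτ, hlτ, hyτ⟩
    exact ⟨⟨τ, hτ, hlτ⟩, hyσ τ hτ ▸ hyτ⟩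
  · rintro ⟨⟨τ, hτ, hlτ⟩, hyσ'⟩
    exact ⟨τ, hτ, hlτ, (hyσ τ hτ).symm ▸ hyσ'⟩

lemma C2.dependsOnVars_label {T : TS E} (hT : T.C2) {s s' : T.S} {l : BExpr E}
    (hl : (s, l, s') ∈ T.Tran) : DependsOnVars l (T.I ∪ T.Ev) := by
  obtain ⟨x, y, hx, hy, hxy⟩ := hT hl
  intro σ τ hστ
  rw [hxy, hxy]
  exact (hx.and hy.dependsOnVars).mono (Set.union_subset_union_right _ Set.sdiff_subset) σ τ hστ

section Restriction

variable {T R : TS E}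

lemma shared_subset_inputs (hshared : SharedOK T R) (hRout : T.Ev ∩ R.Ev = R.Ev \ R.I) :
    T.Ev ∩ R.Ev ⊆ T.I := fun a ha =>
  ((hshared a ha).resolve_right fun h => (hRout ▸ ha : a ∈ R.Ev \ R.I).2 h.1).1

lemma comp_outputs (hRW : R.WF) (hshared : SharedOK T R)
    (hRout : T.Ev ∩ R.Ev = R.Ev \ R.I) :
    (comp T R).Ev \ (comp T R).I = T.Ev \ T.I := by
  ext a
  have hHa : a ∈ T.Ev → a ∈ R.Ev → a ∈ T.I := fun hT hR =>
    shared_subset_inputs hshared hRout ⟨hT, hR⟩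
  have hRouta : a ∈ R.Ev ∧ a ∉ R.I ↔ a ∈ T.Ev ∧ a ∈ R.Ev := by
    rw [← Set.mem_sdiff, ← hRout, Set.mem_inter_iff]
  have hRWa : a ∈ R.I → a ∈ R.Ev := @hRW a
  simp only [comp, Set.mem_sdiff, Set.mem_union, Set.mem_inter_iff]
  tauto

lemma diff_shared_subset_comp_inputs (hRout : T.Ev ∩ R.Ev = R.Ev \ R.I) :
    (T.I ∪ (R.I ∪ R.Ev)) \ (T.Ev ∩ R.Ev) ⊆ (comp T R).I := by
  rintro a ⟨haT | haRI | haR, hnH⟩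
  · exact ⟨Or.inl haT, hnH⟩
  · exact ⟨Or.inr haRI, hnH⟩
  · by_cases haRI : a ∈ R.I
    · exact ⟨Or.inr haRI, hnH⟩
    · exact absurd (hRout ▸ ⟨haR, haRI⟩ : a ∈ T.Ev ∩ R.Ev) hnH

end Restriction

end TS

theorem stmt17_general {E : Type} (T R : TS E)
    (hRW : R.WF)
    (hT4 : T.C4)
    (hR2 : R.C2)
    (hshared : TS.SharedOK T R)
    (hRout : T.Ev ∩ R.Ev = R.Ev \ R.I) :
    (TS.comp T R).C4 := by
  rintro ⟨s, t⟩
  obtain ⟨y, hy, hyT⟩ := hT4 s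
  have hdisj : Disjoint (T.Ev \ T.I) (T.Ev ∩ R.Ev) :=
    Set.disjoint_left.mpr fun _ ha hH => ha.2 (TS.shared_subset_inputs hshared hRout hH)
  refine ⟨y, (TS.comp_outputs hRW hshared hRout).symm ▸ hy, ?_⟩
  rintro _ ⟨s', t'⟩ ⟨lT, lR, hTtr, hRtr, -, rfl⟩
  obtain ⟨xT, hxT, hlT⟩ := hyT hTtr
  refine ⟨TS.hide (T.Ev ∩ R.Ev) (fun σ => xT σ && lR σ),
    ((hxT.and (hR2.dependsOnVars_label hRtr)).hide _).mono
      (TS.diff_shared_subset_comp_inputs hRout), fun σ => ?_⟩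
  have hsplit : (fun τ => lT τ && lR τ) = fun τ => (xT τ && lR τ) && y τ := by
    funext τ
    rw [hlT, Bool.and_right_comm]
  show TS.hide _ _ σ = _
  rw [hsplit, TS.hide_and_of_dependsOnVars hy.dependsOnVars hdisj]

/-- composing T (satisfying constraints 1, 2 and 4) with a restriction
system R (possibly violating constraint 4) whose outputs are exactly the shared
events (all feeding T) and which takes no inputs from T, yields a composition
satisfying constraint 4. -/
theorem stmt17 {E : Type} (T R : TS E)
    (hTW : T.WF) (hRW : R.WF)
    (hT1 : T.C1) (hT2 : T.C2) (hT4 : T.C4)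
    (hR1 : R.C1) (hR2 : R.C2)
    (hshared : TS.SharedOK T R)
    (hRout : T.Ev ∩ R.Ev = R.Ev \ R.I) :
    (TS.comp T R).C4 :=
  stmt17_general T R hRW hT4 hR2 hshared hRout
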